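/- Let Δ ≥ 1 be an integer and let ε ∈ (0, 1). If p = p(n) satisfies p(n) · n^{2/(Δ+1)} → 0 as n → ∞, then asymptotically almost surely G(n, p(n)) does not contain ⌊(1−ε)n/(Δ+1)⌋ pairwise vertex-disjoint copies of the complete graph K_{Δ+1}; in particular, asymptotically almost surely G(n, p(n)) is not H(⌊(1−ε)n⌋, Δ)-universal. -/

import Mathlib

open Finset Filter Real
open scoped Classical

/-- Number of edges of a graph. -/
noncomputable def edgeCount {α : Type*} (G : SimpleGraph α) : ℕ := Nat.card G.edgeSet

/-- The probability that the binomial random graph `G(n,p)` satisfies the property `P`. -/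
noncomputable def gnpProb (n : ℕ) (p : ℝ) (P : SimpleGraph (Fin n) → Prop) : ℝ :=
  ∑ G : SimpleGraph (Fin n),
    if P G then p ^ edgeCount G * (1 - p) ^ (n.choose 2 - edgeCount G) else 0

/-- `G` contains a (not necessarily induced) copy of `H`. -/
def containsCopy {α β : Type*} (G : SimpleGraph α) (H : SimpleGraph β) : Prop :=
  ∃ f : β → α, Function.Injective f ∧ ∀ a b, H.Adj a b → G.Adj (f a) (f b)

/-- `H` has maximum degree at most `Δ`. -/
def maxDegLE {β : Type*} (H : SimpleGraph β) (Δ : ℕ) : Prop :=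
  ∀ v, Nat.card (H.neighborSet v) ≤ Δ

/-- `G` is `H(N, Δ)`-universal. -/
def IsUniversal {n : ℕ} (G : SimpleGraph (Fin n)) (N Δ : ℕ) : Prop :=
  ∀ m : ℕ, m ≤ N → ∀ H : SimpleGraph (Fin m), maxDegLE H Δ → containsCopy G H

/-- `G` contains `N` pairwise vertex-disjoint copies of the complete graph `K_{Δ+1}`. -/
def hasDisjointCliques {n : ℕ} (G : SimpleGraph (Fin n)) (N Δ : ℕ) : Prop :=
  ∃ f : Fin N → Fin (Δ + 1) → Fin n,
    Function.Injective (fun x : Fin N × Fin (Δ + 1) => f x.1 x.2) ∧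
    ∀ (i : Fin N) (a b : Fin (Δ + 1)), a ≠ b → G.Adj (f i a) (f i b)

/-! First-moment method. Vertex-disjoint copies of `K_{Δ+1}` are in particular distinct labelled
copies, and the expected number of labelled copies of `K_{Δ+1}` in `G(n,p)` is at most
`n^{Δ+1} p^{(Δ+1).choose 2} = (p n^{2/(Δ+1)})^{(Δ+1).choose 2} · n`. Since the number of copies
asked for grows linearly in `n`, Markov's inequality bounds the probability of finding them by a
constant times `(p n^{2/(Δ+1)})^{(Δ+1).choose 2} → 0`. Universality fails with it, because `N`
disjoint copies of `K_{Δ+1}` (the graph `⊥ □ ⊤` on `Fin N × Fin (Δ+1)`) form a graph of maximum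
degree `Δ` on `N (Δ+1) ≤ (1-ε)n` vertices. -/

open SimpleGraph Topology

lemma Finset.sum_Icc_pow_mul_pow {α R : Type*} [DecidableEq α] [CommSemiring R]
    {S E : Finset α} (hSE : S ⊆ E) (a b : R) :
    ∑ T ∈ Icc S E, a ^ #T * b ^ (#E - #T) = a ^ #S * (a + b) ^ (#E - #S) := by
  have hdisj : ∀ U ∈ (E \ S).powerset, Disjoint S U := fun U hU =>
    disjoint_of_subset_right (mem_powerset.1 hU) disjoint_sdiff
  rw [Icc_eq_image_powerset hSE, sum_image, ← card_sdiff_of_subset hSE,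
    ← sum_pow_mul_eq_add_pow, mul_sum]
  · refine sum_congr rfl fun U hU => ?_
    rw [card_union_of_disjoint (hdisj U hU), card_sdiff_of_subset hSE, pow_add, Nat.sub_sub]
    ring
  · intro U hU V hV hUV
    rw [← union_sdiff_cancel_left (hdisj U hU), ← union_sdiff_cancel_left (hdisj V hV)]
    exact congrArg (· \ S) hUV

lemma SimpleGraph.sum_edgeFinset_eq_sum_powerset {V M : Type*} [Fintype V] [DecidableEq V]
    [AddCommMonoid M] (f : Finset (Sym2 V) → M) :
    ∑ G : SimpleGraph V, f G.edgeFinset =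
      ∑ T ∈ (⊤ : SimpleGraph V).edgeFinset.powerset, f T := by
  refine sum_nbij' (fun G => G.edgeFinset) (fun T => fromEdgeSet T) ?_ ?_ ?_ ?_ ?_
  · exact fun G _ => mem_powerset.2 (edgeFinset_mono le_top)
  · exact fun _ _ => mem_univ _
  · intro G _
    simp
  · intro T hT
    ext e
    simpa using @mem_powerset.1 hT e
  · exact fun _ _ => rfl

lemma edgeCount_eq_card_edgeFinset {V : Type*} [Fintype V] (G : SimpleGraph V) :
    edgeCount G = #G.edgeFinset := by
  rw [edgeCount, Nat.card_eq_fintype_card, edgeFinset_card]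

lemma edgeCount_top (V : Type*) [Fintype V] :
    edgeCount (⊤ : SimpleGraph V) = (Fintype.card V).choose 2 := by
  rw [edgeCount, Nat.card_eq_fintype_card, ← edgeFinset_card,
    card_edgeFinset_top_eq_card_choose_two]

lemma labelledCopyCount_eq_card_filter {V W : Type*} [Fintype V] [Fintype W]
    (G : SimpleGraph V) (H : SimpleGraph W) :
    G.labelledCopyCount H = #{f : W ↪ V | H.map f ≤ G} := by
  let e : Copy H G ≃ {f : W ↪ V // H.map f ≤ G} :=
    { toFun c := ⟨c.toEmbedding, (map_le_iff_le_comap _ _ _).2 c.toHom.le_comap⟩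
      invFun f := ⟨⟨f.1, fun h => (map_le_iff_le_comap _ _ _).1 f.2 h⟩, f.1.injective⟩ }
  unfold labelledCopyCount
  rw [Fintype.card_congr e, Fintype.card_subtype]

lemma containsCopy_iff_isContained {α β : Type*} (G : SimpleGraph α) (H : SimpleGraph β) :
    containsCopy G H ↔ H ⊑ G :=
  ⟨fun ⟨f, hf, hadj⟩ => ⟨⟨⟨f, hadj _ _⟩, hf⟩⟩,
    fun ⟨c⟩ => ⟨c, c.injective, fun _ _ => c.toHom.map_adj⟩⟩

lemma hasDisjointCliques_iff_isContained {n N Δ : ℕ} (G : SimpleGraph (Fin n)) :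
    hasDisjointCliques G N Δ ↔
      ((⊥ : SimpleGraph (Fin N)) □ (⊤ : SimpleGraph (Fin (Δ + 1)))) ⊑ G := by
  constructor
  · rintro ⟨f, hf, hadj⟩
    refine ⟨⟨⟨fun x => f x.1 x.2, ?_⟩, hf⟩⟩
    rintro ⟨i, a⟩ ⟨j, b⟩ h
    obtain ⟨hab, rfl⟩ := by simpa using h
    exact hadj i a b hab
  · rintro ⟨c⟩
    refine ⟨fun i a => c (i, a), c.injective, fun i a b hab => c.toHom.map_adj ?_⟩
    simpa using hab

lemma maxDegLE_of_isContained {α β : Type*} [Finite β] {A : SimpleGraph α} {B : SimpleGraph β}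
    {Δ : ℕ} (hAB : A ⊑ B) (hB : maxDegLE B Δ) : maxDegLE A Δ := by
  obtain ⟨c⟩ := hAB
  exact fun v => (Nat.card_le_card_of_injective _ (c.mapNeighborSet v).injective).trans (hB (c v))

lemma maxDegLE_bot_boxProd_top {α : Type*} [Fintype α] (Δ : ℕ) :
    maxDegLE ((⊥ : SimpleGraph α) □ (⊤ : SimpleGraph (Fin (Δ + 1)))) Δ := fun v => by
  rw [Nat.card_eq_fintype_card, card_neighborSet_eq_degree, degree_boxProd, bot_degree,
    complete_graph_degree, Fintype.card_fin]
  omega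

lemma IsUniversal.isContained {n N Δ : ℕ} {G : SimpleGraph (Fin n)} (hG : IsUniversal G N Δ)
    {β : Type*} [Fintype β] {H : SimpleGraph β} (hcard : Fintype.card β ≤ N)
    (hH : maxDegLE H Δ) : H ⊑ G := by
  let e := Iso.map (Fintype.equivFin β) H
  have hcopy := hG _ hcard _ (maxDegLE_of_isContained e.symm.isContained hH)
  exact e.isContained.trans ((containsCopy_iff_isContained _ _).1 hcopy)

lemma hasDisjointCliques_of_isUniversal {n N M Δ : ℕ} {G : SimpleGraph (Fin n)}
    (hNM : N * (Δ + 1) ≤ M) (hG : IsUniversal G M Δ) : hasDisjointCliques G N Δ := by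
  rw [hasDisjointCliques_iff_isContained]
  exact hG.isContained (by simpa using hNM) (maxDegLE_bot_boxProd_top Δ)

lemma le_labelledCopyCount_top_of_hasDisjointCliques {n N Δ : ℕ} {G : SimpleGraph (Fin n)}
    (hG : hasDisjointCliques G N Δ) :
    N ≤ G.labelledCopyCount (⊤ : SimpleGraph (Fin (Δ + 1))) := by
  obtain ⟨c⟩ := (hasDisjointCliques_iff_isContained G).1 hG
  let clique : Fin N → Copy (⊤ : SimpleGraph (Fin (Δ + 1))) G :=
    fun i => c.comp (boxProdRight (⊥ : SimpleGraph (Fin N)) ⊤ i).toCopy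
  have hinj : Function.Injective clique := fun i j h => by
    have := c.injective (congrArg (fun d => d 0) h)
    exact (Prod.ext_iff.1 this).1
  have hcard := Fintype.card_le_of_injective clique hinj
  rw [Fintype.card_fin] at hcard
  unfold labelledCopyCount
  convert hcard

noncomputable def gnpWeight (n : ℕ) (p : ℝ) (G : SimpleGraph (Fin n)) : ℝ :=
  p ^ edgeCount G * (1 - p) ^ (n.choose 2 - edgeCount G)

section Gnp

variable {n : ℕ} {p : ℝ}

lemma gnpProb_eq_sum_ite (P : SimpleGraph (Fin n) → Prop) :
    gnpProb n p P = ∑ G, if P G then gnpWeight n p G else 0 := rfl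

lemma gnpWeight_nonneg (hp0 : 0 ≤ p) (hp1 : p ≤ 1) (G : SimpleGraph (Fin n)) :
    0 ≤ gnpWeight n p G :=
  mul_nonneg (pow_nonneg hp0 _) (pow_nonneg (sub_nonneg.2 hp1) _)

lemma gnpProb_subset_edgeFinset {S : Finset (Sym2 (Fin n))}
    (hS : S ⊆ (⊤ : SimpleGraph (Fin n)).edgeFinset) :
    gnpProb n p (fun G => S ⊆ G.edgeFinset) = p ^ #S := by
  have hE : #(⊤ : SimpleGraph (Fin n)).edgeFinset = n.choose 2 := by
    rw [card_edgeFinset_top_eq_card_choose_two, Fintype.card_fin]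
  calc gnpProb n p (fun G => S ⊆ G.edgeFinset)
      = ∑ T ∈ (⊤ : SimpleGraph (Fin n)).edgeFinset.powerset,
          if S ⊆ T then p ^ #T * (1 - p) ^ (n.choose 2 - #T) else 0 := by
        rw [← sum_edgeFinset_eq_sum_powerset]
        simp only [gnpProb_eq_sum_ite, gnpWeight, edgeCount_eq_card_edgeFinset]
        congr!
    _ = ∑ T ∈ Finset.Icc S (⊤ : SimpleGraph (Fin n)).edgeFinset,
          p ^ #T * (1 - p) ^ (n.choose 2 - #T) := by
        rw [Finset.Icc_eq_filter_powerset, sum_filter]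
    _ = p ^ #S := by
        rw [← hE, sum_Icc_pow_mul_pow hS, add_sub_cancel, one_pow, mul_one]

lemma sum_gnpWeight : ∑ G, gnpWeight n p G = 1 := by
  simpa [gnpProb_eq_sum_ite] using
    gnpProb_subset_edgeFinset (n := n) (p := p) (empty_subset _)

lemma gnpProb_nonneg (hp0 : 0 ≤ p) (hp1 : p ≤ 1) (P : SimpleGraph (Fin n) → Prop) :
    0 ≤ gnpProb n p P :=
  sum_nonneg fun G _ => by
    split_ifs
    exacts [gnpWeight_nonneg hp0 hp1 G, le_rfl]

lemma gnpProb_mono (hp0 : 0 ≤ p) (hp1 : p ≤ 1) {P Q : SimpleGraph (Fin n) → Prop}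
    (h : ∀ G, P G → Q G) : gnpProb n p P ≤ gnpProb n p Q :=
  sum_le_sum fun G _ => by
    by_cases hP : P G
    · simp [hP, h G hP]
    · split_ifs
      exacts [gnpWeight_nonneg hp0 hp1 G, le_rfl]

lemma gnpProb_le_one (hp0 : 0 ≤ p) (hp1 : p ≤ 1) (P : SimpleGraph (Fin n) → Prop) :
    gnpProb n p P ≤ 1 := by
  simpa [gnpProb_eq_sum_ite, sum_gnpWeight] using gnpProb_mono (P := P) hp0 hp1 (fun _ _ => trivial)

lemma gnpProb_not (P : SimpleGraph (Fin n) → Prop) :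
    gnpProb n p (fun G => ¬ P G) = 1 - gnpProb n p P := by
  rw [eq_sub_iff_add_eq, gnpProb_eq_sum_ite, gnpProb_eq_sum_ite, ← sum_add_distrib,
    ← sum_gnpWeight (p := p)]
  exact sum_congr rfl fun G _ => by by_cases hP : P G <;> simp [hP]

lemma gnpProb_map_le {β : Type*} [Fintype β] (H : SimpleGraph β) (f : β ↪ Fin n) :
    gnpProb n p (fun G => H.map f ≤ G) = p ^ edgeCount H := by
  simp_rw [edgeCount_eq_card_edgeFinset, ← edgeFinset_subset_edgeFinset,
    ← card_edgeFinset_map f H]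
  exact gnpProb_subset_edgeFinset (edgeFinset_mono le_top)

lemma gnpProb_mul_le_sum_gnpWeight_mul (hp0 : 0 ≤ p) (hp1 : p ≤ 1)
    {P : SimpleGraph (Fin n) → Prop} {X : SimpleGraph (Fin n) → ℕ} {N : ℕ}
    (hX : ∀ G, P G → N ≤ X G) : gnpProb n p P * N ≤ ∑ G, gnpWeight n p G * X G := by
  rw [gnpProb_eq_sum_ite, sum_mul]
  refine sum_le_sum fun G _ => ?_
  split_ifs with hP
  · exact mul_le_mul_of_nonneg_left (by exact_mod_cast hX G hP) (gnpWeight_nonneg hp0 hp1 G)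
  · rw [zero_mul]
    exact mul_nonneg (gnpWeight_nonneg hp0 hp1 G) (Nat.cast_nonneg _)

lemma sum_gnpWeight_mul_card_filter {ι : Type*} [Fintype ι]
    (Q : ι → SimpleGraph (Fin n) → Prop) :
    ∑ G, gnpWeight n p G * #{i | Q i G} = ∑ i, gnpProb n p (Q i) := by
  simp only [card_filter, Nat.cast_sum, mul_sum, gnpProb_eq_sum_ite]
  rw [sum_comm]
  simp

lemma sum_gnpWeight_mul_labelledCopyCount_le (hp0 : 0 ≤ p) {β : Type*} [Fintype β]
    (H : SimpleGraph β) :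
    ∑ G, gnpWeight n p G * G.labelledCopyCount H
      ≤ (n : ℝ) ^ Fintype.card β * p ^ edgeCount H := by
  simp only [labelledCopyCount_eq_card_filter, sum_gnpWeight_mul_card_filter, gnpProb_map_le,
    sum_const, card_univ, Fintype.card_embedding_eq, Fintype.card_fin, nsmul_eq_mul]
  gcongr
  exact_mod_cast Nat.descFactorial_le_pow n _

end Gnp

lemma gnpProb_hasDisjointCliques_mul_le {n : ℕ} {p : ℝ} (hp0 : 0 ≤ p) (hp1 : p ≤ 1)
    (N Δ : ℕ) :
    gnpProb n p (fun G => hasDisjointCliques G N Δ) * N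
      ≤ (n : ℝ) ^ (Δ + 1) * p ^ (Δ + 1).choose 2 := by
  refine (gnpProb_mul_le_sum_gnpWeight_mul hp0 hp1
    fun _ => le_labelledCopyCount_top_of_hasDisjointCliques).trans ?_
  simpa [edgeCount_top] using
    sum_gnpWeight_mul_labelledCopyCount_le (n := n) hp0 (⊤ : SimpleGraph (Fin (Δ + 1)))

lemma rpow_two_div_pow_choose_two {x : ℝ} (hx : 0 ≤ x) (Δ : ℕ) :
    (x ^ ((2 : ℝ) / ((Δ : ℝ) + 1))) ^ (Δ + 1).choose 2 = x ^ Δ := by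
  rw [← Real.rpow_natCast, ← Real.rpow_mul hx, ← Real.rpow_natCast x Δ, Nat.cast_choose_two]
  congr 1
  push_cast
  field_simp
  ring

lemma Nat.floor_div_natCast_mul_le_floor (a : ℝ) (k : ℕ) : ⌊a / k⌋₊ * k ≤ ⌊a⌋₊ := by
  rw [Nat.floor_div_natCast]
  exact Nat.div_mul_le_self _ _

lemma eventually_div_two_le_floor {ι : Type*} {l : Filter ι} {f : ι → ℝ}
    (hf : Tendsto f l atTop) : ∀ᶠ i in l, f i / 2 ≤ ⌊f i⌋₊ :=
  (hf.eventually_ge_atTop 2).mono fun i hi => by linarith [Nat.sub_one_lt_floor (f i)]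

lemma tendsto_gnpProb_hasDisjointCliques {Δ : ℕ} (hΔ : 1 ≤ Δ) {p : ℕ → ℝ}
    (hp : ∀ n, 0 ≤ p n ∧ p n ≤ 1)
    (hsmall : Tendsto (fun n : ℕ => p n * (n : ℝ) ^ ((2 : ℝ) / ((Δ : ℝ) + 1)))
      atTop (𝓝 0))
    {N : ℕ → ℕ} {c : ℝ} (hc : 0 < c) (hN : ∀ᶠ n in atTop, c * n ≤ N n) :
    Tendsto (fun n => gnpProb n (p n) (fun G => hasDisjointCliques G (N n) Δ)) atTop (𝓝 0) := by
  set K := (Δ + 1).choose 2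
  have hK : K ≠ 0 := (Nat.choose_pos (by omega)).ne'
  have hbound : Tendsto (fun n : ℕ => (p n * (n : ℝ) ^ ((2 : ℝ) / ((Δ : ℝ) + 1))) ^ K / c)
      atTop (𝓝 0) := by
    simpa [zero_pow hK] using (hsmall.pow K).div_const c
  refine tendsto_of_tendsto_of_tendsto_of_le_of_le' tendsto_const_nhds hbound
    (Eventually.of_forall fun n => gnpProb_nonneg (hp n).1 (hp n).2 _) ?_
  filter_upwards [hN, eventually_gt_atTop 0] with n hn hn0
  have hn0 : (0 : ℝ) < n := Nat.cast_pos.2 hn0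
  have hfirst := gnpProb_hasDisjointCliques_mul_le (n := n) (hp n).1 (hp n).2 (N n) Δ
  rw [mul_pow, rpow_two_div_pow_choose_two hn0.le, le_div_iff₀ hc]
  refine le_of_mul_le_mul_right ?_ hn0
  calc gnpProb n (p n) (fun G => hasDisjointCliques G (N n) Δ) * c * n
      ≤ gnpProb n (p n) (fun G => hasDisjointCliques G (N n) Δ) * N n := by
        rw [mul_assoc]
        exact mul_le_mul_of_nonneg_left hn (gnpProb_nonneg (hp n).1 (hp n).2 _)
    _ ≤ (n : ℝ) ^ (Δ + 1) * p n ^ K := hfirst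
    _ = p n ^ K * (n : ℝ) ^ Δ * n := by ring

/-- Below `n^{-2/(Δ+1)}`, a.a.s. `G(n,p)` contains no `⌊(1-ε)n/(Δ+1)⌋` disjoint copies of
`K_{Δ+1}`; in particular it is a.a.s. not `H(⌊(1-ε)n⌋, Δ)`-universal. -/
theorem lower_bound_universality
    (Δ : ℕ) (hΔ : 1 ≤ Δ) (ε : ℝ) (hε : ε ∈ Set.Ioo (0 : ℝ) 1)
    (p : ℕ → ℝ) (hp : ∀ n, 0 ≤ p n ∧ p n ≤ 1)
    (hsmall : Tendsto (fun n : ℕ => p n * (n : ℝ) ^ ((2 : ℝ) / ((Δ : ℝ) + 1)))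
      atTop (nhds 0)) :
    Tendsto (fun n : ℕ =>
        gnpProb n (p n) (fun G => ¬ hasDisjointCliques G ⌊(1 - ε) * n / ((Δ : ℝ) + 1)⌋₊ Δ))
      atTop (nhds 1) ∧
    Tendsto (fun n : ℕ =>
        gnpProb n (p n) (fun G => ¬ IsUniversal G ⌊(1 - ε) * n⌋₊ Δ))
      atTop (nhds 1) := by
  have hc : 0 < (1 - ε) / ((Δ : ℝ) + 1) := div_pos (sub_pos.2 hε.2) (by positivity)
  have hN : ∀ᶠ n : ℕ in atTop,
      (1 - ε) / ((Δ : ℝ) + 1) / 2 * n ≤ ⌊(1 - ε) * n / ((Δ : ℝ) + 1)⌋₊ := by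
    have hlin : Tendsto (fun n : ℕ => (1 - ε) * n / ((Δ : ℝ) + 1)) atTop atTop := by
      simpa only [mul_div_right_comm] using tendsto_natCast_atTop_atTop.const_mul_atTop hc
    filter_upwards [eventually_div_two_le_floor hlin] with n hn
    linarith [mul_div_right_comm (1 - ε) (n : ℝ) ((Δ : ℝ) + 1)]
  have hcliques : Tendsto (fun n : ℕ =>
      gnpProb n (p n) (fun G => ¬ hasDisjointCliques G ⌊(1 - ε) * n / ((Δ : ℝ) + 1)⌋₊ Δ))
      atTop (𝓝 1) := by
    simpa [gnpProb_not] using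
      (tendsto_gnpProb_hasDisjointCliques hΔ hp hsmall (half_pos hc) hN).const_sub 1
  refine ⟨hcliques, tendsto_of_tendsto_of_tendsto_of_le_of_le hcliques tendsto_const_nhds
    (fun n => gnpProb_mono (hp n).1 (hp n).2
      fun G hG hU => hG (hasDisjointCliques_of_isUniversal ?_ hU))
    (fun n => gnpProb_le_one (hp n).1 (hp n).2 _)⟩
  exact_mod_cast Nat.floor_div_natCast_mul_le_floor ((1 - ε) * n) (Δ + 1)
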